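/- arXiv:2007.14011 — 2 statements merged into one kernel-verified Lean document; each statement's English description precedes it below -/
import Mathlib

section
/- The REPC (Robust Equilibrium-Preserving Consistency) relation is transitive: if the pair (F^a, F^b) is REPC and the pair (F^b, F^c) is REPC, then the pair (F^a, F^c) is REPC. -/
open scoped BigOperators NNReal

noncomputable section

/-- Class `K∞` function: continuous, strictly increasing and unbounded on `[0,∞)`, vanishing at 0. -/
def IsKInf (φ : ℝ → ℝ) : Prop :=
  ContinuousOn φ (Set.Ici 0) ∧ StrictMonoOn φ (Set.Ici 0) ∧ φ 0 = 0 ∧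
    ∀ c : ℝ, ∃ x : ℝ, 0 ≤ x ∧ c < φ x

/-- Discrete-time trajectory of the closed-loop model `x_{k+1} = F (x_k) (e_k) (T_k)`. -/
def traj {E D : Type*} (F : E → D → ℝ → E) (ξ : E) (es : ℕ → D) (Ts : ℕ → ℝ) : ℕ → E
  | 0 => ξ
  | k + 1 => F (traj F ξ es Ts k) (es k) (Ts k)

/-- `sup_{0 ≤ i ≤ k-1} ‖e_i‖` with the convention that it is `0` for `k = 0`. -/
def supN {D : Type*} [NormedAddCommGroup D] (es : ℕ → D) (k : ℕ) : ℝ :=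
  (((Finset.range k).sup fun i => ‖es i‖₊ : ℝ≥0) : ℝ)

/-- Robust Equilibrium-Preserving Consistency (REPC) of the model `Fa` with the model `Fb`. -/
def REPC {E D : Type*} [NormedAddCommGroup E] [NormedAddCommGroup D]
    (Fa Fb : E → D → ℝ → E) : Prop :=
  ∃ φ : ℝ → ℝ, IsKInf φ ∧
    ∀ M Eb : ℝ, 0 ≤ M → 0 ≤ Eb →
      ∃ K : ℝ, 0 < K ∧ ∃ Tstar : ℝ, 0 < Tstar ∧ ∃ ρ : ℝ → ℝ, IsKInf ρ ∧
        ∀ (xa xb : E) (e : D) (T : ℝ), ‖xa‖ ≤ M → ‖xb‖ ≤ M → ‖e‖ ≤ Eb →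
          0 < T → T < Tstar →
          ‖Fa xa e T - Fb xb e T‖ ≤
            (1 + K * T) * ‖xa - xb‖ + T * ρ T * (max ‖xa‖ ‖xb‖ + φ ‖e‖)

/-- The `k`-fold iterate `α^k(0,{T_i})`. -/
def alphaIter (α : ENNReal → ℝ → ENNReal) (Ts : ℕ → ℝ) : ℕ → ENNReal
  | 0 => 0
  | k + 1 => α (alphaIter α Ts k) (Ts k)

/-- Robust Equilibrium-Preserving Multistep Consistency (REPMC) of `Fa` with `Fb`,
with a fixed class-`K∞` function `φ`. -/
def REPMCWith {E D : Type*} [NormedAddCommGroup E] [NormedAddCommGroup D]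
    (Fa Fb : E → D → ℝ → E) (φ : ℝ → ℝ) : Prop :=
  ∀ M Eb 𝒯 η : ℝ, 0 ≤ M → 0 ≤ Eb → 0 < 𝒯 → 0 < η →
    ∃ Tstar : ℝ, 0 < Tstar ∧ ∃ α : ENNReal → ℝ → ENNReal,
      (∀ T : ℝ, 0 ≤ T → T < Tstar → Monotone (fun δ => α δ T)) ∧
      (∀ (xa xb : E) (e : D) (T δ : ℝ), ‖xa‖ ≤ M → ‖xb‖ ≤ M → ‖e‖ ≤ Eb →
        0 < T → T < Tstar → ‖xa - xb‖ ≤ δ →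
        ENNReal.ofReal ‖Fa xa e T - Fb xb e T‖ ≤ α (ENNReal.ofReal δ) T) ∧
      (∀ Ts : ℕ → ℝ, (∀ i, 0 < Ts i ∧ Ts i < Tstar) →
        ∀ k : ℕ, (∑ i ∈ Finset.range k, Ts i) ≤ 𝒯 →
          alphaIter α Ts k ≤ ENNReal.ofReal (η * M + φ Eb))

/-- REPMC: existence of a suitable `φ ∈ K∞`. -/
def REPMC {E D : Type*} [NormedAddCommGroup E] [NormedAddCommGroup D]
    (Fa Fb : E → D → ℝ → E) : Prop :=
  ∃ φ : ℝ → ℝ, IsKInf φ ∧ REPMCWith Fa Fb φ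

/-- Semiglobal exponential ISS under varying sampling rate, with constants `K ≥ 1`, `λ > 0`
and gain `γ ∈ K∞`. -/
def SEISSVSR {E D : Type*} [NormedAddCommGroup E] [NormedAddCommGroup D]
    (F : E → D → ℝ → E) (K lam : ℝ) (γ : ℝ → ℝ) : Prop :=
  ∀ M Eb : ℝ, 0 ≤ M → 0 ≤ Eb → ∃ Tstar : ℝ, 0 < Tstar ∧
    ∀ (ξ : E) (es : ℕ → D) (Ts : ℕ → ℝ),
      ‖ξ‖ ≤ M → (∀ i, ‖es i‖ ≤ Eb) → (∀ i, 0 < Ts i ∧ Ts i < Tstar) →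
      ∀ k : ℕ, ‖traj F ξ es Ts k‖ ≤
        K * ‖ξ‖ * Real.exp (-lam * ∑ i ∈ Finset.range k, Ts i) + γ (supN es k)

/-- Class `KL` function. -/
def IsKL (β : ℝ → ℝ → ℝ) : Prop :=
  (∀ t : ℝ, 0 ≤ t → ContinuousOn (fun s => β s t) (Set.Ici 0) ∧
    StrictMonoOn (fun s => β s t) (Set.Ici 0) ∧ β 0 t = 0) ∧
  (∀ s : ℝ, 0 ≤ s → StrictAntiOn (fun t => β s t) (Set.Ici 0) ∧
    Filter.Tendsto (fun t => β s t) Filter.atTop (nhds 0))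

lemma IsKInf.nonneg {φ : ℝ → ℝ} (hφ : IsKInf φ) {x : ℝ} (hx : 0 ≤ x) : 0 ≤ φ x :=
  hφ.2.2.1 ▸ hφ.2.1.monotoneOn Set.self_mem_Ici hx hx

lemma IsKInf.add {φ ψ : ℝ → ℝ} (hφ : IsKInf φ) (hψ : IsKInf ψ) : IsKInf (φ + ψ) := by
  refine ⟨hφ.1.add hψ.1,
    fun a ha b hb hab => add_lt_add (hφ.2.1 ha hb hab) (hψ.2.1 ha hb hab),
    by simp [hφ.2.2.1, hψ.2.2.1], fun c => ?_⟩
  obtain ⟨x, hx, hcx⟩ := hφ.2.2.2 c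
  exact ⟨x, hx, hcx.trans_le (le_add_of_nonneg_right (hψ.nonneg hx))⟩

/-- Pass through `Fb xa`: the `Fa`–`Fb` estimate is then used at coinciding states, where its
Lipschitz term vanishes, so the composite keeps the constant `K` of the `Fb`–`Fc` pair. -/
theorem REPC.trans {E D : Type*} [NormedAddCommGroup E] [NormedAddCommGroup D]
    {Fa Fb Fc : E → D → ℝ → E} (hab : REPC Fa Fb) (hbc : REPC Fb Fc) : REPC Fa Fc := by
  obtain ⟨φ₁, hφ₁, h₁⟩ := hab
  obtain ⟨φ₂, hφ₂, h₂⟩ := hbc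
  refine ⟨φ₁ + φ₂, hφ₁.add hφ₂, fun M Eb hM hEb => ?_⟩
  obtain ⟨_, _, T₁, hT₁, ρ₁, hρ₁, H₁⟩ := h₁ M Eb hM hEb
  obtain ⟨K, hK, T₂, hT₂, ρ₂, hρ₂, H₂⟩ := h₂ M Eb hM hEb
  refine ⟨K, hK, min T₁ T₂, lt_min hT₁ hT₂, ρ₁ + ρ₂, hρ₁.add hρ₂, ?_⟩
  intro xa xc e T hxa hxc he hT hTlt
  have hρ₁T : 0 ≤ T * ρ₁ T := mul_nonneg hT.le (hρ₁.nonneg hT.le)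
  have hρ₂T : 0 ≤ T * ρ₂ T := mul_nonneg hT.le (hρ₂.nonneg hT.le)
  have hφ₁e : 0 ≤ φ₁ ‖e‖ := hφ₁.nonneg (norm_nonneg e)
  have hφ₂e : 0 ≤ φ₂ ‖e‖ := hφ₂.nonneg (norm_nonneg e)
  have hFab :
      ‖Fa xa e T - Fb xa e T‖ ≤ T * ρ₁ T * (max ‖xa‖ ‖xc‖ + φ₁ ‖e‖) := by
    have := H₁ xa xa e T hxa hxa he hT (hTlt.trans_le (min_le_left _ _))
    rw [sub_self, norm_zero, mul_zero, zero_add, max_self] at this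
    exact this.trans (by gcongr; exact le_max_left _ _)
  have hFbc := H₂ xa xc e T hxa hxc he hT (hTlt.trans_le (min_le_right _ _))
  calc ‖Fa xa e T - Fc xc e T‖
      ≤ ‖Fa xa e T - Fb xa e T‖ + ‖Fb xa e T - Fc xc e T‖ :=
        norm_sub_le_norm_sub_add_norm_sub _ _ _
    _ ≤ T * ρ₁ T * (max ‖xa‖ ‖xc‖ + φ₁ ‖e‖) +
          ((1 + K * T) * ‖xa - xc‖ + T * ρ₂ T * (max ‖xa‖ ‖xc‖ + φ₂ ‖e‖)) :=
        add_le_add hFab hFbc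
    _ ≤ (1 + K * T) * ‖xa - xc‖ +
          T * (ρ₁ + ρ₂) T * (max ‖xa‖ ‖xc‖ + (φ₁ + φ₂) ‖e‖) := by
      simp only [Pi.add_apply]
      nlinarith [mul_nonneg hρ₁T hφ₂e, mul_nonneg hρ₂T hφ₁e]

theorem stmt0 {n q : ℕ}
    (Fa Fb Fc : EuclideanSpace ℝ (Fin n) → EuclideanSpace ℝ (Fin q) → ℝ →
      EuclideanSpace ℝ (Fin n))
    (hab : REPC Fa Fb) (hbc : REPC Fb Fc) : REPC Fa Fc :=
  hab.trans hbc
end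
end

section
/- Lyapunov ISS decrease for the perturbed Euler–Heun closed loop: Let V(x) = x², f_d(x) = −x³ − 2x, F̄^{Heun}(x,T) := x + (T/2)(f_d(x) + f_d(x + T f_d(x))), U(x,e,T) := (F̄^{Heun}(x+e,T) − x − e)/T − (x+e)³, and F̄(x,e,T) := x + T(x³ + U(x,e,T)). Then for every M, E ≥ 0 there exists T̃ > 0 (e.g. T̃ = min{1/(C(1 + ∑_{i=1}^{8} M^{2i})), 1} with C = 670) such that V(F̄(x,e,T)) − V(x) ≤ −T·x²/2 whenever |e| ≤ min{0.01|x|, E}, |x| ≤ M and T ∈ (0, T̃). -/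
open scoped BigOperators NNReal

noncomputable section

/-- Desired closed-loop continuous-time dynamics. -/
def fd (x : ℝ) : ℝ := -x ^ 3 - 2 * x

/-- Heun (second-order Runge–Kutta) model of `ẋ = f_d(x)`. -/
def heun (x T : ℝ) : ℝ := x + T / 2 * (fd x + fd (x + T * fd x))

/-- Control law with additive state-measurement error. -/
def Ue (x e T : ℝ) : ℝ := (heun (x + e) T - x - e) / T - (x + e) ^ 3

/-- Perturbed closed-loop Euler model. -/
def Fbar (x e T : ℝ) : ℝ := x + T * (x ^ 3 + Ue x e T)

/-- Lyapunov function. -/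
def V (x : ℝ) : ℝ := x ^ 2

/-!
Writing `y = x + e` and `z = y + T f_d(y)` for the Heun stage, the closed loop is
`F̄(x,e,T) = x + T g` with `g = x³ - y³ + (f_d(y) + f_d(z))/2`. Since `y` and, for small `T`, `z`
are within a few percent of `x`, `g` differs from `f_d(x) = -x³ - 2x` by at most `(|x|³ + |x|)/4`,
so `2 x g ≤ -3 x²`, while `|g| ≤ L |x|` with `L = 3(M² + 1)` on `|x| ≤ M`. Then
`V(x + T g) - V(x) = 2 T x g + T² g² ≤ -3 T x² + T² L² x²`, which is at most `-T x²/2`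
once `T L² ≤ 5/2`.
-/

lemma sq_add_mul_sub_sq_le {x g T β L : ℝ} (hT : 0 ≤ T) (hxg : 2 * x * g ≤ -(β * x ^ 2))
    (hg : |g| ≤ L * |x|) (hTL : T * L ^ 2 ≤ β - 1 / 2) :
    (x + T * g) ^ 2 - x ^ 2 ≤ -(T * x ^ 2 / 2) := by
  have hg2 : g ^ 2 ≤ L ^ 2 * x ^ 2 := by
    rw [← sq_abs g, ← sq_abs x, ← mul_pow]
    exact pow_le_pow_left₀ (abs_nonneg g) hg 2
  have hTg2 : T * g ^ 2 ≤ (β - 1 / 2) * x ^ 2 := by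
    calc T * g ^ 2 ≤ T * L ^ 2 * x ^ 2 := by rw [mul_assoc]; gcongr
      _ ≤ (β - 1 / 2) * x ^ 2 := by gcongr
  calc (x + T * g) ^ 2 - x ^ 2 = T * (2 * x * g) + T * (T * g ^ 2) := by ring
    _ ≤ T * -(β * x ^ 2) + T * ((β - 1 / 2) * x ^ 2) := by gcongr
    _ = -(T * x ^ 2 / 2) := by ring

lemma abs_fd (u : ℝ) : |fd u| = |u| * (u ^ 2 + 2) := by
  rw [show fd u = -(u * (u ^ 2 + 2)) by unfold fd; ring, abs_neg, abs_mul,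
    abs_of_pos (by positivity : 0 < u ^ 2 + 2)]

lemma abs_le_of_abs_sub_le {u x δ : ℝ} (hu : |u - x| ≤ δ * |x|) : |u| ≤ (1 + δ) * |x| := by
  calc |u| ≤ |x| + |u - x| := by simpa using abs_add_le x (u - x)
    _ ≤ (1 + δ) * |x| := by linarith

lemma abs_cube_sub_cube_le {u x δ : ℝ} (hδ : δ ≤ 1 / 10) (hu : |u - x| ≤ δ * |x|) :
    |u ^ 3 - x ^ 3| ≤ 4 * δ * |x| ^ 3 := by
  have hu' : |u| ≤ 11 / 10 * |x| := (abs_le_of_abs_sub_le hu).trans (by gcongr; linarith)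
  have hq : |u ^ 2 + u * x + x ^ 2| ≤ 4 * |x| ^ 2 := by
    rw [abs_of_nonneg (by nlinarith [sq_nonneg (u + x)])]
    nlinarith [sq_nonneg (u - x), sq_abs u, sq_abs x,
      mul_le_mul hu' hu' (abs_nonneg u) (by positivity)]
  calc |u ^ 3 - x ^ 3| = |u - x| * |u ^ 2 + u * x + x ^ 2| := by rw [← abs_mul]; ring_nf
    _ ≤ δ * |x| * (4 * |x| ^ 2) := by gcongr; exact (abs_nonneg _).trans hu
    _ = 4 * δ * |x| ^ 3 := by ring

lemma abs_fd_sub_fd_le {u x δ : ℝ} (hδ : δ ≤ 1 / 10) (hu : |u - x| ≤ δ * |x|) :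
    |fd u - fd x| ≤ 4 * δ * |x| ^ 3 + 2 * δ * |x| := by
  calc |fd u - fd x| = |-(u ^ 3 - x ^ 3) + -(2 * (u - x))| := by unfold fd; ring_nf
    _ ≤ |u ^ 3 - x ^ 3| + 2 * |u - x| := by
      grw [abs_add_le, abs_neg, abs_neg, abs_mul, abs_two]
    _ ≤ 4 * δ * |x| ^ 3 + 2 * δ * |x| := by
      grw [abs_cube_sub_cube_le hδ hu, hu]; linarith

lemma abs_fd_le_of_abs_le {u x M : ℝ} (hx : |x| ≤ M) (hu : |u| ≤ 11 / 10 * |x|) :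
    |fd u| ≤ 3 * (M ^ 2 + 1) * |x| := by
  have hu2 : u ^ 2 ≤ 2 * M ^ 2 := by
    rw [← sq_abs u]
    nlinarith [mul_le_mul hu hu (abs_nonneg u) (by positivity), abs_nonneg x]
  calc |fd u| = |u| * (u ^ 2 + 2) := abs_fd u
    _ ≤ 11 / 10 * |x| * (2 * M ^ 2 + 2) := by gcongr
    _ ≤ 3 * (M ^ 2 + 1) * |x| := by nlinarith [abs_nonneg x, sq_nonneg M]

def closedLoopRate (x e T : ℝ) : ℝ :=
  x ^ 3 - (x + e) ^ 3 + (fd (x + e) + fd (x + e + T * fd (x + e))) / 2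

lemma Fbar_eq_add_mul_closedLoopRate {x e T : ℝ} (hT : T ≠ 0) :
    Fbar x e T = x + T * closedLoopRate x e T := by
  simp only [Fbar, Ue, heun, closedLoopRate]
  field_simp
  ring

section Estimates

variable {x e T M : ℝ} (he : |e| ≤ |x| / 100) (hx : |x| ≤ M) (hT : 0 ≤ T)
  (hTL : T * (3 * (M ^ 2 + 1)) ≤ 1 / 25)
include he hx hT hTL

lemma abs_heunStage_sub_le : |x + e + T * fd (x + e) - x| ≤ 1 / 20 * |x| := by
  have hy : |x + e - x| ≤ 1 / 100 * |x| := by rw [add_sub_cancel_left]; linarith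
  have hfy := abs_fd_le_of_abs_le hx ((abs_le_of_abs_sub_le hy).trans (by gcongr; norm_num))
  calc |x + e + T * fd (x + e) - x| ≤ |e| + T * |fd (x + e)| := by
        grw [add_sub_right_comm, add_sub_cancel_left, abs_add_le, abs_mul, abs_of_nonneg hT]
    _ ≤ |x| / 100 + T * (3 * (M ^ 2 + 1) * |x|) := by gcongr
    _ ≤ 1 / 20 * |x| := by nlinarith [abs_nonneg x]

lemma abs_closedLoopRate_sub_fd_le :
    |closedLoopRate x e T - fd x| ≤ (|x| ^ 3 + |x|) / 4 := by
  have hy : |x + e - x| ≤ 1 / 100 * |x| := by rw [add_sub_cancel_left]; linarith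
  have h₁ := abs_cube_sub_cube_le (by norm_num) hy
  have h₂ := abs_fd_sub_fd_le (by norm_num) hy
  have h₃ := abs_fd_sub_fd_le (by norm_num) (abs_heunStage_sub_le he hx hT hTL)
  set y := x + e
  set z := y + T * fd y
  calc |closedLoopRate x e T - fd x|
        = |-(y ^ 3 - x ^ 3) + ((fd y - fd x) + (fd z - fd x)) / 2| := by
          simp only [closedLoopRate, y, z]; ring_nf
    _ ≤ |y ^ 3 - x ^ 3| + (|fd y - fd x| + |fd z - fd x|) / 2 := by
        grw [abs_add_le, abs_neg, abs_div, abs_two, abs_add_le]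
    _ ≤ (|x| ^ 3 + |x|) / 4 := by linarith [abs_nonneg x, pow_nonneg (abs_nonneg x) 3]

lemma two_mul_mul_closedLoopRate_le : 2 * x * closedLoopRate x e T ≤ -(3 * x ^ 2) := by
  have hr := abs_closedLoopRate_sub_fd_le he hx hT hTL
  have hxr : x * (closedLoopRate x e T - fd x) ≤ |x| * ((|x| ^ 3 + |x|) / 4) :=
    (le_abs_self _).trans (by rw [abs_mul]; gcongr)
  have hx4 : |x| * ((|x| ^ 3 + |x|) / 4) = (x ^ 4 + x ^ 2) / 4 := by
    calc |x| * ((|x| ^ 3 + |x|) / 4) = ((|x| ^ 2) ^ 2 + |x| ^ 2) / 4 := by ring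
      _ = (x ^ 4 + x ^ 2) / 4 := by rw [sq_abs]; ring
  have hfd : 2 * x * fd x = -(2 * x ^ 4) - 4 * x ^ 2 := by unfold fd; ring
  calc 2 * x * closedLoopRate x e T = 2 * x * fd x + 2 * (x * (closedLoopRate x e T - fd x)) := by
        ring
    _ ≤ -(3 * x ^ 2) := by nlinarith [pow_nonneg (sq_nonneg x) 2]

lemma abs_closedLoopRate_le : |closedLoopRate x e T| ≤ 3 * (M ^ 2 + 1) * |x| := by
  have hr := abs_closedLoopRate_sub_fd_le he hx hT hTL
  have hx2 : |x| ^ 2 ≤ M ^ 2 := pow_le_pow_left₀ (abs_nonneg x) hx 2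
  calc |closedLoopRate x e T| ≤ |fd x| + |closedLoopRate x e T - fd x| := by
        simpa using abs_add_le (fd x) (closedLoopRate x e T - fd x)
    _ ≤ |x| * (|x| ^ 2 + 2) + (|x| ^ 3 + |x|) / 4 := by rw [abs_fd, ← sq_abs x]; gcongr
    _ ≤ 3 * (M ^ 2 + 1) * |x| := by nlinarith [abs_nonneg x]

end Estimates

theorem stmt16 :
    ∀ M E : ℝ, 0 ≤ M → 0 ≤ E → ∃ Tt : ℝ, 0 < Tt ∧
      ∀ x e T : ℝ, |e| ≤ min (0.01 * |x|) E → |x| ≤ M → 0 < T → T < Tt →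
        V (Fbar x e T) - V x ≤ -(T * x ^ 2 / 2) := by
  intro M E _ _
  set L := 3 * (M ^ 2 + 1)
  have hL3 : 3 ≤ L := by nlinarith [sq_nonneg M]
  refine ⟨1 / (10 * L ^ 2), by positivity, fun x e T he hx hT hTt => ?_⟩
  have he' : |e| ≤ |x| / 100 := by linarith [(le_min_iff.mp he).1]
  have hTL2 : T * L ^ 2 ≤ 1 / 10 := by
    rw [lt_div_iff₀ (by positivity)] at hTt; linarith
  have hTL : T * L ≤ 1 / 25 := by nlinarith
  rw [V, V, Fbar_eq_add_mul_closedLoopRate hT.ne']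
  exact sq_add_mul_sub_sq_le (β := 3) hT.le (two_mul_mul_closedLoopRate_le he' hx hT.le hTL)
    (abs_closedLoopRate_le he' hx hT.le hTL) (by linarith)
end
end
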